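/- Suppose Π is invertible at every point, with pointwise inverse matrix ω (so ∑_j Π^{ij} ω_{jk} = δ^i_k), and suppose ω is smooth. Then the twisted Poisson condition ∑_{l} ( Π^{li} ∂_l Π^{jk} + Π^{lj} ∂_l Π^{ki} + Π^{lk} ∂_l Π^{ij} ) = ∑_{l,m,r} Π^{li} Π^{mj} Π^{rk} H_{lmr} holds for all i,j,k if and only if ∂_i ω_{jk} + ∂_j ω_{ki} + ∂_k ω_{ij} = H_{ijk} for all i,j,k. -/

import Mathlib

open Finset Matrix

noncomputable def pd {n : ℕ} (i : Fin n) (f : (Fin n → ℝ) → ℝ) : (Fin n → ℝ) → ℝ :=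
  fun x => fderiv ℝ f x (Pi.single i 1)

namespace Stmt4Aux

lemma left_inv_anti {n : ℕ} (A B : Fin n → Fin n → ℝ)
    (hA : ∀ i j, A i j = - A j i)
    (hAB : ∀ i k, ∑ j, A i j * B j k = if i = k then (1:ℝ) else 0) :
    (∀ i k, ∑ j, B i j * A j k = if i = k then (1:ℝ) else 0) ∧ (∀ i j, B i j = - B j i) := by
  set M : Matrix (Fin n) (Fin n) ℝ := Matrix.of A with hM
  set N : Matrix (Fin n) (Fin n) ℝ := Matrix.of B with hN
  have hMN : M * N = 1 := by
    ext a b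
    simpa [Matrix.mul_apply, Matrix.one_apply, hM, hN] using hAB a b
  have hNM : N * M = 1 := mul_eq_one_comm.mp hMN
  have hMt : Mᵀ = -M := by
    ext a b
    simp [Matrix.transpose_apply, hM]
    exact (hA b a).symm ▸ rfl
  have h2 : (-Nᵀ) * M = 1 := by
    have ht : Nᵀ * Mᵀ = 1 := by
      rw [← Matrix.transpose_mul, hMN, Matrix.transpose_one]
    rw [hMt, Matrix.mul_neg] at ht
    rw [Matrix.neg_mul]
    exact ht
  have hNt : -Nᵀ = N := by
    calc -Nᵀ = (-Nᵀ) * (M * N) := by rw [hMN, Matrix.mul_one]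
    _ = ((-Nᵀ) * M) * N := by rw [Matrix.mul_assoc]
    _ = N := by rw [h2, Matrix.one_mul]
  constructor
  · intro i k
    have := congrFun (congrFun hNM i) k
    simpa [Matrix.mul_apply, Matrix.one_apply, hM, hN] using this
  · intro i j
    have := congrFun (congrFun hNt i) j
    simp only [Matrix.neg_apply, Matrix.transpose_apply, hN, Matrix.of_apply] at this
    linarith

variable {n : ℕ}

lemma swapA (v f : Fin n → ℝ) (g : Fin n → Fin n → ℝ) :
    ∑ k, v k * ∑ l, f l * g l k = ∑ l, f l * ∑ k, v k * g l k := by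
  simp only [Finset.mul_sum]
  rw [Finset.sum_comm]
  exact Finset.sum_congr rfl fun l _ => Finset.sum_congr rfl fun k _ => by ring

lemma swapB (v f : Fin n → ℝ) (g : Fin n → Fin n → ℝ) :
    ∑ k, v k * ∑ l, g l k * f l = ∑ l, (∑ k, v k * g l k) * f l := by
  simp only [Finset.mul_sum, Finset.sum_mul]
  rw [Finset.sum_comm]
  exact Finset.sum_congr rfl fun l _ => Finset.sum_congr rfl fun k _ => by ring

lemma sum_neg_congr (f g : Fin n → ℝ) (h : ∀ k, f k = -g k) : ∑ k, f k = -∑ k, g k := by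
  rw [← Finset.sum_neg_distrib]
  exact Finset.sum_congr rfl fun k _ => h k

section core
variable (A B : Fin n → Fin n → ℝ) (D E h3 : Fin n → Fin n → Fin n → ℝ)

-- derived contraction helpers
lemma hBAc (hA : ∀ i j, A i j = -A j i)
    (hBA : ∀ i k, ∑ j, B i j * A j k = if i = k then (1:ℝ) else 0)
    (a l : Fin n) : ∑ k, B a k * A l k = -(if l = a then (1:ℝ) else 0) := by
  have h1 : ∑ k, B a k * A l k = -∑ k, B a k * A k l :=
    sum_neg_congr _ _ fun k => by rw [hA l k]; ring
  rw [h1, hBA a l]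
  by_cases h : a = l <;> simp [h, eq_comm]

lemma hDB (hB : ∀ i j, B i j = -B j i)
    (hDE : ∀ l i k, ∑ j, (D l i j * B j k + A i j * E l j k) = 0)
    (l j c : Fin n) : ∑ k, B c k * D l j k = ∑ k, A j k * E l k c := by
  have h := hDE l j c
  rw [Finset.sum_add_distrib] at h
  have h1 : ∑ k, B c k * D l j k = -∑ k, D l j k * B k c :=
    sum_neg_congr _ _ fun k => by rw [hB c k]; ring
  linarith [h1, h]

lemma hEA (hA : ∀ i j, A i j = -A j i)
    (hED : ∀ l i k, ∑ j, (E l i j * A j k + B i j * D l j k) = 0)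
    (a b k : Fin n) : ∑ c, A k c * E a b c = ∑ c, B b c * D a c k := by
  have h := hED a b k
  rw [Finset.sum_add_distrib] at h
  have h1 : ∑ c, A k c * E a b c = -∑ c, E a b c * A c k :=
    sum_neg_congr _ _ fun c => by rw [hA k c]; ring
  linarith [h1, h]

end core
section core2
variable {n : ℕ} (A B : Fin n → Fin n → ℝ) (D E h3 : Fin n → Fin n → Fin n → ℝ)

lemma core_fwd
    (hA : ∀ i j, A i j = -A j i) (hB : ∀ i j, B i j = -B j i)
    (hD : ∀ l i j, D l i j = -D l j i) (hE : ∀ l i j, E l i j = -E l j i)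
    (hBA : ∀ i k, ∑ j, B i j * A j k = if i = k then (1:ℝ) else 0)
    (hDE : ∀ l i k, ∑ j, (D l i j * B j k + A i j * E l j k) = 0)
    (hT : ∀ i j k : Fin n, ∑ l, (A l i * D l j k + A l j * D l k i + A l k * D l i j)
        = ∑ l, ∑ m, ∑ r, A l i * A m j * A r k * h3 l m r)
    (a b c : Fin n) : E a b c + E b c a + E c a b = h3 a b c := by
  have key : (∑ i, B a i * ∑ j, B b j * ∑ k, B c k *
        (∑ l, (A l i * D l j k + A l j * D l k i + A l k * D l i j)))
      = ∑ i, B a i * ∑ j, B b j * ∑ k, B c k *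
        (∑ l, ∑ m, ∑ r, A l i * A m j * A r k * h3 l m r) := by
    refine Finset.sum_congr rfl fun i _ => ?_
    congr 1
    refine Finset.sum_congr rfl fun j _ => ?_
    congr 1
    refine Finset.sum_congr rfl fun k _ => ?_
    rw [hT]
  -- LHS computation
  have L1 : ∀ i j : Fin n, ∑ k, B c k *
        (∑ l, (A l i * D l j k + A l j * D l k i + A l k * D l i j))
      = (∑ l, A l i * ∑ k, A j k * E l k c)
        - (∑ l, A l j * ∑ k, A i k * E l k c) - D c i j := by
    intro i j
    have split : ∑ k, B c k * (∑ l, (A l i * D l j k + A l j * D l k i + A l k * D l i j))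
        = (∑ k, B c k * ∑ l, A l i * D l j k) + (∑ k, B c k * ∑ l, A l j * D l k i)
          + (∑ k, B c k * ∑ l, A l k * D l i j) := by
      rw [← Finset.sum_add_distrib, ← Finset.sum_add_distrib]
      refine Finset.sum_congr rfl fun k _ => ?_
      rw [Finset.sum_add_distrib, Finset.sum_add_distrib]
      ring
    rw [split]
    have t1 : ∑ k, B c k * ∑ l, A l i * D l j k = ∑ l, A l i * ∑ k, A j k * E l k c := by
      rw [swapA]
      exact Finset.sum_congr rfl fun l _ => by rw [hDB A B D E hB hDE]
    have t2 : ∑ k, B c k * ∑ l, A l j * D l k i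
        = -(∑ l, A l j * ∑ k, A i k * E l k c) := by
      have e1 : ∑ k, B c k * ∑ l, A l j * D l k i = -∑ k, B c k * ∑ l, A l j * D l i k := by
        refine sum_neg_congr _ _ fun k => ?_
        have : ∑ l, A l j * D l k i = -∑ l, A l j * D l i k :=
          sum_neg_congr _ _ fun l => by rw [hD l k i]; ring
        rw [this]; ring
      rw [e1, swapA]
      congr 1
      exact Finset.sum_congr rfl fun l _ => by rw [hDB A B D E hB hDE]
    have t3 : ∑ k, B c k * ∑ l, A l k * D l i j = -D c i j := by
      rw [swapB]
      have : ∀ l : Fin n, (∑ k, B c k * A l k) * D l i j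
          = (-(if l = c then (1:ℝ) else 0)) * D l i j := fun l => by
        rw [hBAc A B hA hBA c l]
      rw [Finset.sum_congr rfl fun l _ => this l]
      simp
    rw [t1, t2, t3]
    ring
  have L2 : ∀ i : Fin n, ∑ j, B b j *
        ((∑ l, A l i * ∑ k, A j k * E l k c)
          - (∑ l, A l j * ∑ k, A i k * E l k c) - D c i j)
      = (∑ l, A l i * E l b c) + (∑ k, A i k * E b k c) - ∑ k, A i k * E c k b := by
    intro i
    have split : ∑ j, B b j * ((∑ l, A l i * ∑ k, A j k * E l k c)
          - (∑ l, A l j * ∑ k, A i k * E l k c) - D c i j)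
        = (∑ j, B b j * ∑ l, A l i * ∑ k, A j k * E l k c)
          - (∑ j, B b j * ∑ l, A l j * ∑ k, A i k * E l k c)
          - (∑ j, B b j * D c i j) := by
      rw [← Finset.sum_sub_distrib, ← Finset.sum_sub_distrib]
      exact Finset.sum_congr rfl fun j _ => by ring
    rw [split]
    have p1 : ∑ j, B b j * ∑ l, A l i * ∑ k, A j k * E l k c
        = ∑ l, A l i * E l b c := by
      rw [swapA]
      refine Finset.sum_congr rfl fun l _ => ?_
      congr 1
      rw [swapB]
      have : ∀ k : Fin n, (∑ j, B b j * A j k) * E l k c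
          = (if b = k then (1:ℝ) else 0) * E l k c := fun k => by rw [hBA b k]
      rw [Finset.sum_congr rfl fun k _ => this k]
      simp
    have p2 : ∑ j, B b j * ∑ l, A l j * ∑ k, A i k * E l k c
        = -(∑ k, A i k * E b k c) := by
      rw [swapB]
      have : ∀ l : Fin n, (∑ j, B b j * A l j) * (∑ k, A i k * E l k c)
          = (-(if l = b then (1:ℝ) else 0)) * (∑ k, A i k * E l k c) := fun l => by
        rw [hBAc A B hA hBA b l]
      rw [Finset.sum_congr rfl fun l _ => this l]
      simp
    have p3 : ∑ j, B b j * D c i j = ∑ k, A i k * E c k b :=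
      hDB A B D E hB hDE c i b
    rw [p1, p2, p3]
    ring
  have L3 : ∑ i, B a i * ((∑ l, A l i * E l b c) + (∑ k, A i k * E b k c)
        - ∑ k, A i k * E c k b)
      = -E a b c - E b c a - E c a b := by
    have split : ∑ i, B a i * ((∑ l, A l i * E l b c) + (∑ k, A i k * E b k c)
          - ∑ k, A i k * E c k b)
        = (∑ i, B a i * ∑ l, A l i * E l b c)
          + (∑ i, B a i * ∑ k, A i k * E b k c)
          - (∑ i, B a i * ∑ k, A i k * E c k b) := by
      rw [← Finset.sum_add_distrib, ← Finset.sum_sub_distrib]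
      exact Finset.sum_congr rfl fun i _ => by ring
    rw [split]
    have q1 : ∑ i, B a i * ∑ l, A l i * E l b c = -E a b c := by
      rw [swapB]
      have : ∀ l : Fin n, (∑ i, B a i * A l i) * E l b c
          = (-(if l = a then (1:ℝ) else 0)) * E l b c := fun l => by
        rw [hBAc A B hA hBA a l]
      rw [Finset.sum_congr rfl fun l _ => this l]
      simp
    have q2 : ∑ i, B a i * ∑ k, A i k * E b k c = -E b c a := by
      rw [swapB]
      have : ∀ k : Fin n, (∑ i, B a i * A i k) * E b k c
          = (if a = k then (1:ℝ) else 0) * E b k c := fun k => by rw [hBA a k]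
      rw [Finset.sum_congr rfl fun k _ => this k]
      simp [hE b a c]
    have q3 : ∑ i, B a i * ∑ k, A i k * E c k b = E c a b := by
      rw [swapB]
      have : ∀ k : Fin n, (∑ i, B a i * A i k) * E c k b
          = (if a = k then (1:ℝ) else 0) * E c k b := fun k => by rw [hBA a k]
      rw [Finset.sum_congr rfl fun k _ => this k]
      simp
    rw [q1, q2, q3]
    ring
  -- RHS computation
  have hre : ∀ i j k : Fin n, (∑ l, ∑ m, ∑ r, A l i * A m j * A r k * h3 l m r)
      = ∑ l, A l i * ∑ m, A m j * ∑ r, A r k * h3 l m r := by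
    intro i j k
    simp only [Finset.mul_sum]
    refine Finset.sum_congr rfl fun l _ => Finset.sum_congr rfl fun m _ =>
      Finset.sum_congr rfl fun r _ => by ring
  have R1 : ∀ i j : Fin n, ∑ k, B c k * (∑ l, ∑ m, ∑ r, A l i * A m j * A r k * h3 l m r)
      = ∑ l, A l i * ∑ m, A m j * (-(h3 l m c)) := by
    intro i j
    rw [Finset.sum_congr rfl fun k _ => by rw [hre i j k]]
    rw [swapA]
    refine Finset.sum_congr rfl fun l _ => ?_
    congr 1
    rw [swapA]
    refine Finset.sum_congr rfl fun m _ => ?_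
    congr 1
    rw [swapB]
    have : ∀ r : Fin n, (∑ k, B c k * A r k) * h3 l m r
        = (-(if r = c then (1:ℝ) else 0)) * h3 l m r := fun r => by
      rw [hBAc A B hA hBA c r]
    rw [Finset.sum_congr rfl fun r _ => this r]
    simp
  have R2 : ∀ i : Fin n, ∑ j, B b j * ∑ l, A l i * ∑ m, A m j * (-(h3 l m c))
      = ∑ l, A l i * h3 l b c := by
    intro i
    rw [swapA]
    refine Finset.sum_congr rfl fun l _ => ?_
    congr 1
    rw [swapB]
    have : ∀ m : Fin n, (∑ j, B b j * A m j) * (-(h3 l m c))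
        = (-(if m = b then (1:ℝ) else 0)) * (-(h3 l m c)) := fun m => by
      rw [hBAc A B hA hBA b m]
    rw [Finset.sum_congr rfl fun m _ => this m]
    simp
  have R3 : ∑ i, B a i * ∑ l, A l i * h3 l b c = -h3 a b c := by
    rw [swapB]
    have : ∀ l : Fin n, (∑ i, B a i * A l i) * h3 l b c
        = (-(if l = a then (1:ℝ) else 0)) * h3 l b c := fun l => by
      rw [hBAc A B hA hBA a l]
    rw [Finset.sum_congr rfl fun l _ => this l]
    simp
  -- combine
  have lhs_eq : (∑ i, B a i * ∑ j, B b j * ∑ k, B c k *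
        (∑ l, (A l i * D l j k + A l j * D l k i + A l k * D l i j)))
      = -E a b c - E b c a - E c a b := by
    calc (∑ i, B a i * ∑ j, B b j * ∑ k, B c k *
          (∑ l, (A l i * D l j k + A l j * D l k i + A l k * D l i j)))
        = ∑ i, B a i * ∑ j, B b j * ((∑ l, A l i * ∑ k, A j k * E l k c)
            - (∑ l, A l j * ∑ k, A i k * E l k c) - D c i j) :=
          Finset.sum_congr rfl fun i _ => congrArg (fun t => B a i * t)
            (Finset.sum_congr rfl fun j _ => congrArg (fun t => B b j * t) (L1 i j))
      _ = ∑ i, B a i * ((∑ l, A l i * E l b c) + (∑ k, A i k * E b k c)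
            - ∑ k, A i k * E c k b) :=
          Finset.sum_congr rfl fun i _ => congrArg (fun t => B a i * t) (L2 i)
      _ = -E a b c - E b c a - E c a b := L3
  have rhs_eq : (∑ i, B a i * ∑ j, B b j * ∑ k, B c k *
        (∑ l, ∑ m, ∑ r, A l i * A m j * A r k * h3 l m r))
      = -h3 a b c := by
    calc (∑ i, B a i * ∑ j, B b j * ∑ k, B c k *
          (∑ l, ∑ m, ∑ r, A l i * A m j * A r k * h3 l m r))
        = ∑ i, B a i * ∑ j, B b j * (∑ l, A l i * ∑ m, A m j * (-(h3 l m c))) :=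
          Finset.sum_congr rfl fun i _ => congrArg (fun t => B a i * t)
            (Finset.sum_congr rfl fun j _ => congrArg (fun t => B b j * t) (R1 i j))
      _ = ∑ i, B a i * ∑ l, A l i * h3 l b c :=
          Finset.sum_congr rfl fun i _ => congrArg (fun t => B a i * t) (R2 i)
      _ = -h3 a b c := R3
  rw [lhs_eq, rhs_eq] at key
  linarith

end core2
section core3
variable {n : ℕ} (A B : Fin n → Fin n → ℝ) (D E h3 : Fin n → Fin n → Fin n → ℝ)

lemma core_rev
    (hA : ∀ i j, A i j = -A j i)
    (hD : ∀ l i j, D l i j = -D l j i) (hE : ∀ l i j, E l i j = -E l j i)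
    (hAB : ∀ i k, ∑ j, A i j * B j k = if i = k then (1:ℝ) else 0)
    (hED : ∀ l i k, ∑ j, (E l i j * A j k + B i j * D l j k) = 0)
    (hS : ∀ a b c : Fin n, E a b c + E b c a + E c a b = h3 a b c)
    (i j k : Fin n) :
    ∑ l, (A l i * D l j k + A l j * D l k i + A l k * D l i j)
      = ∑ l, ∑ m, ∑ r, A l i * A m j * A r k * h3 l m r := by
  have key : (∑ a, A i a * ∑ b, A j b * ∑ c, A k c * (E a b c + E b c a + E c a b))
      = ∑ a, A i a * ∑ b, A j b * ∑ c, A k c * h3 a b c :=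
    Finset.sum_congr rfl fun a _ => congrArg (fun t => A i a * t)
      (Finset.sum_congr rfl fun b _ => congrArg (fun t => A j b * t)
        (Finset.sum_congr rfl fun c _ => by rw [hS a b c]))
  -- LHS computation
  have V1 : ∀ a b : Fin n, ∑ c, A k c * (E a b c + E b c a + E c a b)
      = (∑ c, B b c * D a c k) - (∑ c, B a c * D b c k) + ∑ c, A k c * E c a b := by
    intro a b
    have split : ∑ c, A k c * (E a b c + E b c a + E c a b)
        = (∑ c, A k c * E a b c) + (∑ c, A k c * E b c a) + ∑ c, A k c * E c a b := by
      rw [← Finset.sum_add_distrib, ← Finset.sum_add_distrib]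
      exact Finset.sum_congr rfl fun c _ => by ring
    rw [split]
    have u1 : ∑ c, A k c * E a b c = ∑ c, B b c * D a c k := hEA A B D E hA hED a b k
    have u2 : ∑ c, A k c * E b c a = -(∑ c, B a c * D b c k) := by
      have e1 : ∑ c, A k c * E b c a = -∑ c, A k c * E b a c :=
        sum_neg_congr _ _ fun c => by rw [hE b c a]; ring
      rw [e1, hEA A B D E hA hED b a k]
    rw [u1, u2]
    ring
  have V2 : ∀ a : Fin n, ∑ b, A j b * ((∑ c, B b c * D a c k)
        - (∑ c, B a c * D b c k) + ∑ c, A k c * E c a b)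
      = D a j k - (∑ b, A j b * ∑ c, B a c * D b c k)
        + ∑ c, A k c * ∑ b, B a b * D c b j := by
    intro a
    have split : ∑ b, A j b * ((∑ c, B b c * D a c k)
          - (∑ c, B a c * D b c k) + ∑ c, A k c * E c a b)
        = (∑ b, A j b * ∑ c, B b c * D a c k)
          - (∑ b, A j b * ∑ c, B a c * D b c k)
          + ∑ b, A j b * ∑ c, A k c * E c a b := by
      rw [← Finset.sum_sub_distrib, ← Finset.sum_add_distrib]
      exact Finset.sum_congr rfl fun b _ => by ring
    rw [split]
    have w1 : ∑ b, A j b * ∑ c, B b c * D a c k = D a j k := by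
      rw [swapB]
      have : ∀ c : Fin n, (∑ b, A j b * B b c) * D a c k
          = (if j = c then (1:ℝ) else 0) * D a c k := fun c => by rw [hAB j c]
      rw [Finset.sum_congr rfl fun c _ => this c]
      simp
    have w3 : ∑ b, A j b * ∑ c, A k c * E c a b
        = ∑ c, A k c * ∑ b, B a b * D c b j := by
      rw [swapA]
      exact Finset.sum_congr rfl fun c _ =>
        congrArg (fun t => A k c * t) (hEA A B D E hA hED c a j)
    rw [w1, w3]
  have V3 : ∑ a, A i a * (D a j k - (∑ b, A j b * ∑ c, B a c * D b c k)
        + ∑ c, A k c * ∑ b, B a b * D c b j)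
      = -((∑ l, A l i * D l j k) + (∑ l, A l j * D l k i) + ∑ l, A l k * D l i j) := by
    have split : ∑ a, A i a * (D a j k - (∑ b, A j b * ∑ c, B a c * D b c k)
          + ∑ c, A k c * ∑ b, B a b * D c b j)
        = (∑ a, A i a * D a j k)
          - (∑ a, A i a * ∑ b, A j b * ∑ c, B a c * D b c k)
          + ∑ a, A i a * ∑ c, A k c * ∑ b, B a b * D c b j := by
      rw [← Finset.sum_sub_distrib, ← Finset.sum_add_distrib]
      exact Finset.sum_congr rfl fun a _ => by ring
    rw [split]
    have z1 : ∑ a, A i a * D a j k = -∑ l, A l i * D l j k :=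
      sum_neg_congr _ _ fun a => by rw [hA i a]; ring
    have z2 : ∑ a, A i a * ∑ b, A j b * ∑ c, B a c * D b c k
        = ∑ l, A l j * D l k i := by
      rw [swapA]
      have inner : ∀ b : Fin n, ∑ a, A i a * ∑ c, B a c * D b c k = D b i k := by
        intro b
        rw [swapB]
        have : ∀ c : Fin n, (∑ a, A i a * B a c) * D b c k
            = (if i = c then (1:ℝ) else 0) * D b c k := fun c => by rw [hAB i c]
        rw [Finset.sum_congr rfl fun c _ => this c]
        simp
      rw [Finset.sum_congr rfl fun b _ => congrArg (fun t => A j b * t) (inner b)]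
      exact Finset.sum_congr rfl fun b _ => by rw [hD b i k, hA j b]; ring
    have z3 : ∑ a, A i a * ∑ c, A k c * ∑ b, B a b * D c b j
        = -∑ l, A l k * D l i j := by
      rw [swapA]
      have inner : ∀ c : Fin n, ∑ a, A i a * ∑ b, B a b * D c b j = D c i j := by
        intro c
        rw [swapB]
        have : ∀ b : Fin n, (∑ a, A i a * B a b) * D c b j
            = (if i = b then (1:ℝ) else 0) * D c b j := fun b => by rw [hAB i b]
        rw [Finset.sum_congr rfl fun b _ => this b]
        simp
      rw [Finset.sum_congr rfl fun c _ => congrArg (fun t => A k c * t) (inner c)]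
      exact sum_neg_congr _ _ fun c => by rw [hA k c]; ring
    rw [z1, z2, z3]
    ring
  -- RHS computation
  have Rflat : ∑ a, A i a * ∑ b, A j b * ∑ c, A k c * h3 a b c
      = ∑ a, ∑ b, ∑ c, A i a * A j b * A k c * h3 a b c := by
    simp only [Finset.mul_sum]
    exact Finset.sum_congr rfl fun a _ => Finset.sum_congr rfl fun b _ =>
      Finset.sum_congr rfl fun c _ => by ring
  have Rneg : (∑ l, ∑ m, ∑ r, A l i * A m j * A r k * h3 l m r)
      = -∑ a, ∑ b, ∑ c, A i a * A j b * A k c * h3 a b c := by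
    rw [← Finset.sum_neg_distrib]
    refine Finset.sum_congr rfl fun l _ => ?_
    rw [← Finset.sum_neg_distrib]
    refine Finset.sum_congr rfl fun m _ => ?_
    rw [← Finset.sum_neg_distrib]
    refine Finset.sum_congr rfl fun r _ => ?_
    rw [hA l i, hA m j, hA r k]
    ring
  -- combine
  have lhs_eq : (∑ a, A i a * ∑ b, A j b * ∑ c, A k c * (E a b c + E b c a + E c a b))
      = -((∑ l, A l i * D l j k) + (∑ l, A l j * D l k i) + ∑ l, A l k * D l i j) := by
    calc (∑ a, A i a * ∑ b, A j b * ∑ c, A k c * (E a b c + E b c a + E c a b))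
        = ∑ a, A i a * ∑ b, A j b * ((∑ c, B b c * D a c k)
            - (∑ c, B a c * D b c k) + ∑ c, A k c * E c a b) :=
          Finset.sum_congr rfl fun a _ => congrArg (fun t => A i a * t)
            (Finset.sum_congr rfl fun b _ => congrArg (fun t => A j b * t) (V1 a b))
      _ = ∑ a, A i a * (D a j k - (∑ b, A j b * ∑ c, B a c * D b c k)
            + ∑ c, A k c * ∑ b, B a b * D c b j) :=
          Finset.sum_congr rfl fun a _ => congrArg (fun t => A i a * t) (V2 a)
      _ = -((∑ l, A l i * D l j k) + (∑ l, A l j * D l k i) + ∑ l, A l k * D l i j) := V3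
  have expand : ∑ l, (A l i * D l j k + A l j * D l k i + A l k * D l i j)
      = (∑ l, A l i * D l j k) + (∑ l, A l j * D l k i) + ∑ l, A l k * D l i j := by
    rw [Finset.sum_add_distrib, Finset.sum_add_distrib]
  rw [lhs_eq, Rflat] at key
  rw [expand, Rneg]
  linarith

end core3
end Stmt4Aux


namespace Stmt4Aux

lemma pd_neg {n : ℕ} (f g : (Fin n → ℝ) → ℝ) (h : ∀ x, f x = - g x) (l : Fin n)
    (x : Fin n → ℝ) : pd l f x = - pd l g x := by
  have : f = fun x => - g x := funext h
  rw [this, pd, pd, fderiv_fun_neg]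
  simp

lemma pd_inv {n : ℕ} (F G : Fin n → Fin n → (Fin n → ℝ) → ℝ)
    (hdF : ∀ i j, Differentiable ℝ (F i j)) (hdG : ∀ i j, Differentiable ℝ (G i j))
    (i k : Fin n) (c : ℝ) (hconst : ∀ x, ∑ j, F i j x * G j k x = c)
    (l : Fin n) (x : Fin n → ℝ) :
    ∑ j, (pd l (F i j) x * G j k x + F i j x * pd l (G j k) x) = 0 := by
  have h0 : fderiv ℝ (fun x => ∑ j, F i j x * G j k x) x = 0 := by
    have : (fun x => ∑ j, F i j x * G j k x) = fun _ => c := funext hconst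
    rw [this]
    exact fderiv_const_apply c
  have h1 : fderiv ℝ (fun x => ∑ j, F i j x * G j k x) x
      = ∑ j, fderiv ℝ (fun x => F i j x * G j k x) x := by
    exact fderiv_fun_sum (fun j _ => ((hdF i j).differentiableAt).mul ((hdG j k).differentiableAt))
  have h2 : ∀ j : Fin n, fderiv ℝ (fun x => F i j x * G j k x) x
      = F i j x • fderiv ℝ (G j k) x + G j k x • fderiv ℝ (F i j) x :=
    fun j => fderiv_fun_mul ((hdF i j).differentiableAt) ((hdG j k).differentiableAt)
  have h3 := DFunLike.congr_fun (h1.symm.trans h0) (Pi.single l 1)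
  simp only [ContinuousLinearMap.coe_sum', Finset.sum_apply,
    ContinuousLinearMap.zero_apply] at h3
  rw [show (0:ℝ) = ∑ j : Fin n, ((fderiv ℝ (fun x => F i j x * G j k x) x) (Pi.single l 1))
    from h3.symm]
  refine Finset.sum_congr rfl fun j _ => ?_
  rw [h2 j]
  simp only [ContinuousLinearMap.add_apply, ContinuousLinearMap.coe_smul', Pi.smul_apply,
    smul_eq_mul, pd]
  ring

end Stmt4Aux

theorem stmt_4 (n : ℕ) (hn : 0 < n)
    (P : Fin n → Fin n → (Fin n → ℝ) → ℝ)
    (w : Fin n → Fin n → (Fin n → ℝ) → ℝ)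
    (H : Fin n → Fin n → Fin n → (Fin n → ℝ) → ℝ)
    (hPsm : ∀ i j, ContDiff ℝ (⊤ : ℕ∞) (P i j))
    (hPanti : ∀ i j x, P i j x = - P j i x)
    (hwsm : ∀ i j, ContDiff ℝ (⊤ : ℕ∞) (w i j))
    (hHsm : ∀ i j k, ContDiff ℝ (⊤ : ℕ∞) (H i j k))
    (hHanti : ∀ i j k x, H i j k x = - H j i k x ∧ H i j k x = - H i k j x)
    (hinv : ∀ i k : Fin n, ∀ x : Fin n → ℝ,
      ∑ j, P i j x * w j k x = if i = k then (1 : ℝ) else 0) :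
    (∀ i j k : Fin n, ∀ x : Fin n → ℝ,
      ∑ l, (P l i x * pd l (P j k) x + P l j x * pd l (P k i) x
        + P l k x * pd l (P i j) x)
      = ∑ l, ∑ m, ∑ r, P l i x * P m j x * P r k x * H l m r x) ↔
    (∀ i j k : Fin n, ∀ x : Fin n → ℝ,
      pd i (w j k) x + pd j (w k i) x + pd k (w i j) x = H i j k x) := by
  have hdP : ∀ i j, Differentiable ℝ (P i j) := fun i j => (hPsm i j).differentiable (by simp)
  have hdw : ∀ i j, Differentiable ℝ (w i j) := fun i j => (hwsm i j).differentiable (by simp)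
  have hmx : ∀ x : Fin n → ℝ,
      (∀ i k, ∑ j, w i j x * P j k x = if i = k then (1:ℝ) else 0)
        ∧ (∀ i j, w i j x = - w j i x) :=
    fun x => Stmt4Aux.left_inv_anti (fun i j => P i j x) (fun i j => w i j x)
      (fun i j => hPanti i j x) (fun i k => hinv i k x)
  have hBA : ∀ i k : Fin n, ∀ x : Fin n → ℝ,
      ∑ j, w i j x * P j k x = if i = k then (1:ℝ) else 0 := fun i k x => (hmx x).1 i k
  have hwa : ∀ i j : Fin n, ∀ x : Fin n → ℝ, w i j x = - w j i x := fun i j x => (hmx x).2 i j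
  have hDpd : ∀ l i j : Fin n, ∀ x : Fin n → ℝ, pd l (P i j) x = - pd l (P j i) x :=
    fun l i j x => Stmt4Aux.pd_neg _ _ (hPanti i j) l x
  have hEpd : ∀ l i j : Fin n, ∀ x : Fin n → ℝ, pd l (w i j) x = - pd l (w j i) x :=
    fun l i j x => Stmt4Aux.pd_neg _ _ (fun y => hwa i j y) l x
  have hDE : ∀ x : Fin n → ℝ, ∀ l i k : Fin n,
      ∑ j, (pd l (P i j) x * w j k x + P i j x * pd l (w j k) x) = 0 :=
    fun x l i k => Stmt4Aux.pd_inv P w hdP hdw i k _ (fun y => hinv i k y) l x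
  have hED : ∀ x : Fin n → ℝ, ∀ l i k : Fin n,
      ∑ j, (pd l (w i j) x * P j k x + w i j x * pd l (P j k) x) = 0 :=
    fun x l i k => Stmt4Aux.pd_inv w P hdw hdP i k _ (fun y => hBA i k y) l x
  constructor
  · intro hT i j k x
    exact Stmt4Aux.core_fwd (fun a b => P a b x) (fun a b => w a b x)
      (fun l a b => pd l (P a b) x) (fun l a b => pd l (w a b) x)
      (fun l m r => H l m r x)
      (fun a b => hPanti a b x) (fun a b => hwa a b x)
      (fun l a b => hDpd l a b x) (fun l a b => hEpd l a b x)
      (fun a b => hBA a b x) (fun l a b => hDE x l a b)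
      (fun a b c => hT a b c x) i j k
  · intro hS i j k x
    exact Stmt4Aux.core_rev (fun a b => P a b x) (fun a b => w a b x)
      (fun l a b => pd l (P a b) x) (fun l a b => pd l (w a b) x)
      (fun l m r => H l m r x)
      (fun a b => hPanti a b x)
      (fun l a b => hDpd l a b x) (fun l a b => hEpd l a b x)
      (fun a b => hinv a b x) (fun l a b => hED x l a b)
      (fun a b c => hS a b c x) i j k
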